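/- Compatibility of concatenation with Foata normal forms: let s, t ∈ M(Σ, D) with Foata normal forms ⟨s⟩ = A₁⋯A_p and ⟨st⟩ = B₁⋯B_m. Then m ≥ p, A_i ⊆ B_i for each 1 ≤ i ≤ p, and Π((B₁\A₁)⋯(B_p\A_p)B_{p+1}⋯B_m) = t. -/

import Mathlib

variable {α : Type*}

/-- One commutation step: swap two adjacent independent letters
(letters `a`, `b` with `(a,b) ∉ D`, i.e. `(a,b) ∈ I`). -/
inductive TraceStep (D : α → α → Prop) : List α → List α → Prop
  | swap (x y : List α) (a b : α) (h : ¬ D a b) :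
      TraceStep D (x ++ a :: b :: y) (x ++ b :: a :: y)

/-- Trace equivalence `≡_D`: the least equivalence relation containing all
swaps of adjacent independent letters in arbitrary contexts (equivalently,
the least congruence on `Σ*` with `ab ≡ ba` for `(a,b) ∈ I`). -/
abbrev TraceEquiv (D : α → α → Prop) : List α → List α → Prop :=
  Relation.EqvGen (TraceStep D)

/-- `I_D⁻`: nonempty sets of pairwise independent letters (independence cliques). -/
def Clique (D : α → α → Prop) : Type _ :=
  {A : Finset α // A.Nonempty ∧ ∀ a ∈ A, ∀ b ∈ A, a ≠ b → ¬ D a b}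

/-- `A ▷ B` : every letter of `B` depends on some letter of `A`. -/
def Rhd (D : α → α → Prop) (A B : Clique D) : Prop :=
  ∀ b ∈ B.1, ∃ a ∈ A.1, D a b

/-- The set of Foata normal forms: words `A₁ ⋯ A_p` over `I_D⁻` with
`A_i ▷ A_{i+1}` for all `i`. -/
def Foata (D : α → α → Prop) : Language (Clique D) :=
  {w | w.Chain' (Rhd D)}

/-- The canonical morphism `Π : (I_D⁻)* → Σ*` (composed with `[·]` it gives
the canonical morphism to `M(Σ,D)`): each clique is mapped to the product of
its elements (in some order; the trace is independent of the order). -/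
noncomputable def cliqueFlat {D : α → α → Prop} (w : List (Clique D)) : List α :=
  (w.map fun A => A.1.toList).flatten

/-- `Π` extended to words over possibly-empty sets of letters (`Π(∅) = ε`). -/
noncomputable def setFlat (w : List (Finset α)) : List α :=
  (w.map Finset.toList).flatten

/-!
Induction on `⟨s⟩ = A₁ ⋯ A_p`. Call `b` minimal in a word `w` if `w ≡ b w'` for some `w'`.
Letters of `A₁` are minimal in `st`, and a minimal letter of a Foata form lies in its first clique,
so `A₁ ⊆ B₁`. A letter of `B₁ \ A₁` is minimal in `st` but not in `A₁`; it is then independent of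
`A₁`, hence (by `A₁ ▷ A₂`) not in `A₂`, and so on down the chain, so it commutes with all of `s`
and is minimal in `t`. Pulling `B₁ \ A₁` to the front of `t` and cancelling the common prefix
`A₁ (B₁ \ A₁)` leaves the same situation for `A₂ ⋯ A_p` and `B₂ ⋯ B_m`. Left cancellation comes
from the projection lemma: two words are equivalent iff their projections onto every dependent
pair of letters agree.
-/

namespace TraceEquiv

variable {D : α → α → Prop}

protected theorem symm {u v : List α} (h : TraceEquiv D u v) : TraceEquiv D v u :=
  Relation.EqvGen.symm _ _ h

protected theorem trans {u v w : List α} (h₁ : TraceEquiv D u v) (h₂ : TraceEquiv D v w) :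
    TraceEquiv D u w :=
  Relation.EqvGen.trans _ _ _ h₁ h₂

instance : Trans (TraceEquiv D) (TraceEquiv D) (TraceEquiv D) :=
  ⟨TraceEquiv.trans⟩

theorem append_append {u v : List α} (h : TraceEquiv D u v) (x y : List α) :
    TraceEquiv D (x ++ u ++ y) (x ++ v ++ y) := by
  induction h with
  | rel _ _ hstep =>
    obtain ⟨p, q, a, b, hab⟩ := hstep
    simpa using Relation.EqvGen.rel _ _ (TraceStep.swap (D := D) (x ++ p) (q ++ y) a b hab)
  | refl => exact .refl _
  | symm _ _ _ ih => exact ih.symm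
  | trans _ _ _ _ _ ih₁ ih₂ => exact ih₁.trans ih₂

theorem append_left (x : List α) {u v : List α} (h : TraceEquiv D u v) :
    TraceEquiv D (x ++ u) (x ++ v) := by
  simpa using h.append_append x []

theorem append_right (y : List α) {u v : List α} (h : TraceEquiv D u v) :
    TraceEquiv D (u ++ y) (v ++ y) := by
  simpa using h.append_append [] y

theorem cons (a : α) {u v : List α} (h : TraceEquiv D u v) : TraceEquiv D (a :: u) (a :: v) :=
  h.append_left [a]

theorem cons_append_of_indep {b : α} {x : List α} (hx : ∀ c ∈ x, ¬ D b c) (y : List α) :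
    TraceEquiv D (b :: (x ++ y)) (x ++ b :: y) := by
  induction x with
  | nil => exact .refl _
  | cons c x ih =>
    have hbc : TraceEquiv D (b :: c :: (x ++ y)) (c :: b :: (x ++ y)) :=
      .rel _ _ (TraceStep.swap [] _ b c (hx c List.mem_cons_self))
    exact hbc.trans ((ih fun c hc => hx c (.tail _ hc)).cons c)

theorem append_comm_of_indep {u v : List α} (h : ∀ b ∈ v, ∀ c ∈ u, ¬ D b c) :
    TraceEquiv D (u ++ v) (v ++ u) := by
  induction v with
  | nil => simpa using .refl _
  | cons b v ih =>
    have hb : TraceEquiv D (u ++ b :: v) (b :: (u ++ v)) :=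
      (cons_append_of_indep (h b List.mem_cons_self) v).symm
    exact hb.trans ((ih fun b' hb' => h b' (.tail _ hb')).cons b)

theorem of_perm {l₁ l₂ : List α} (hp : l₁.Perm l₂)
    (hind : ∀ a ∈ l₁, ∀ b ∈ l₁, a ≠ b → ¬ D a b) : TraceEquiv D l₁ l₂ := by
  induction hp with
  | nil => exact .refl _
  | cons a _ ih => exact (ih fun x hx y hy => hind x (.tail _ hx) y (.tail _ hy)).cons a
  | swap x y l =>
    by_cases hxy : y = x
    · subst hxy; exact .refl _
    · exact .rel _ _ (TraceStep.swap [] l y x (hind y (by simp) x (by simp) hxy))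
  | trans hp₁ _ ih₁ ih₂ =>
    exact (ih₁ hind).trans (ih₂ fun a ha b hb => hind a (hp₁.mem_iff.2 ha) b (hp₁.mem_iff.2 hb))

end TraceEquiv

section Projection

variable [DecidableEq α] {D : α → α → Prop}

def pairProj (p q : α) (w : List α) : List α :=
  w.filter fun x => x = p ∨ x = q

@[simp]
theorem pairProj_append (p q : α) (u v : List α) :
    pairProj p q (u ++ v) = pairProj p q u ++ pairProj p q v :=
  List.filter_append ..

theorem pairProj_swap (hrefl : Reflexive D) (hsymm : Symmetric D) {p q a b : α} (hpq : D p q)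
    (hab : ¬ D a b) (y : List α) : pairProj p q (a :: b :: y) = pairProj p q (b :: a :: y) := by
  have hboth : ¬ ((a = p ∨ a = q) ∧ (b = p ∨ b = q)) := by
    rintro ⟨ha | ha, hb | hb⟩ <;> subst ha hb
    exacts [hab (hrefl _), hab hpq, hab (hsymm hpq), hab (hrefl _)]
  simp only [pairProj, List.filter_cons]
  split_ifs <;> simp_all

theorem TraceEquiv.pairProj_eq (hrefl : Reflexive D) (hsymm : Symmetric D) {p q : α}
    (hpq : D p q) {u v : List α} (h : TraceEquiv D u v) : pairProj p q u = pairProj p q v := by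
  induction h with
  | rel _ _ hstep =>
    obtain ⟨x, y, a, b, hab⟩ := hstep
    simp only [pairProj_append, pairProj_swap hrefl hsymm hpq hab]
  | refl => rfl
  | symm _ _ _ ih => exact ih.symm
  | trans _ _ _ _ _ ih₁ ih₂ => exact ih₁.trans ih₂

/-- `b` can be moved to the front of `w` (see `IsMinimal.exists_equiv_cons`); phrased through
projections so that it is visibly invariant under `≡`. -/
def IsMinimal (D : α → α → Prop) (w : List α) (b : α) : Prop :=
  ∀ c, D b c → (pairProj b c w).head? = some b

theorem IsMinimal.of_equiv (hrefl : Reflexive D) (hsymm : Symmetric D) {u v : List α} {b : α}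
    (h : TraceEquiv D u v) (hu : IsMinimal D u b) : IsMinimal D v b := fun c hc =>
  h.pairProj_eq hrefl hsymm hc ▸ hu c hc

theorem not_isMinimal_nil (hrefl : Reflexive D) (b : α) : ¬ IsMinimal D [] b := fun h =>
  nomatch h b (hrefl b)

theorem isMinimal_append_of_mem {b : α} {x : List α} (hb : b ∈ x)
    (hx : ∀ c ∈ x, D b c → c = b) (z : List α) : IsMinimal D (x ++ z) b := by
  intro c hc
  induction x with
  | nil => simp at hb
  | cons a x ih =>
    by_cases hab : a = b
    · simp [pairProj, hab]
    by_cases hac : a = c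
    · exact absurd (hx a List.mem_cons_self (hac ▸ hc)) hab
    have hb' : b ∈ x := (List.mem_cons.1 hb).resolve_left (Ne.symm hab)
    simpa [pairProj, hab, hac] using ih hb' fun c hc => hx c (.tail _ hc)

theorem IsMinimal.of_cons {a b : α} {w : List α} (h : IsMinimal D (a :: w) b) (hab : a ≠ b) :
    ¬ D b a ∧ IsMinimal D w b := by
  have hba : ¬ D b a := fun hba => by simpa [pairProj, hab] using h a hba
  refine ⟨hba, fun c hc => ?_⟩
  have hac : a ≠ c := by rintro rfl; exact hba hc
  simpa [pairProj, hab, hac] using h c hc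

theorem IsMinimal.of_append {b : α} {x w : List α} (h : IsMinimal D (x ++ w) b) (hb : b ∉ x) :
    (∀ c ∈ x, ¬ D b c) ∧ IsMinimal D w b := by
  induction x with
  | nil => exact ⟨by simp, h⟩
  | cons a x ih =>
    obtain ⟨hba, hxw⟩ := h.of_cons fun hab => hb (hab ▸ List.mem_cons_self)
    obtain ⟨hx, hw⟩ := ih hxw fun hbx => hb (.tail _ hbx)
    exact ⟨List.forall_mem_cons.2 ⟨hba, hx⟩, hw⟩

theorem IsMinimal.exists_equiv_cons (hrefl : Reflexive D) {w : List α} {b : α}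
    (h : IsMinimal D w b) : ∃ w', TraceEquiv D w (b :: w') := by
  induction w with
  | nil => exact absurd h (not_isMinimal_nil hrefl b)
  | cons a w ih =>
    by_cases hab : a = b
    · exact ⟨w, hab ▸ .refl _⟩
    obtain ⟨hba, hw⟩ := h.of_cons hab
    obtain ⟨w', hw'⟩ := ih hw
    have hswap : TraceEquiv D (a :: b :: w') (b :: a :: w') :=
      (Relation.EqvGen.rel _ _ (TraceStep.swap [] w' b a hba)).symm
    exact ⟨a :: w', (hw'.cons a).trans hswap⟩

theorem TraceEquiv.of_pairProj_eq (hrefl : Reflexive D) (hsymm : Symmetric D) {u v : List α}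
    (h : ∀ p q, D p q → pairProj p q u = pairProj p q v) : TraceEquiv D u v := by
  induction u generalizing v with
  | nil =>
    cases v with
    | nil => exact .refl _
    | cons c v => simpa [pairProj] using h c c (hrefl c)
  | cons a u ih =>
    have ha : IsMinimal D v a := fun c hc => by
      rw [← h a c hc]
      simp [pairProj]
    obtain ⟨v', hv⟩ := ha.exists_equiv_cons hrefl
    have hproj : ∀ p q, D p q → pairProj p q u = pairProj p q v' := fun p q hpq => by
      have := (h p q hpq).trans (hv.pairProj_eq hrefl hsymm hpq)
      by_cases hap : a = p ∨ a = q <;> simpa [pairProj, hap] using this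
    exact ((ih hproj).cons a).trans hv.symm

theorem TraceEquiv.append_left_cancel (hrefl : Reflexive D) (hsymm : Symmetric D)
    {u w₁ w₂ : List α} (h : TraceEquiv D (u ++ w₁) (u ++ w₂)) : TraceEquiv D w₁ w₂ :=
  of_pairProj_eq hrefl hsymm fun _ _ hpq => by simpa using h.pairProj_eq hrefl hsymm hpq

theorem TraceEquiv.exists_equiv_append_of_isMinimal (hrefl : Reflexive D) (hsymm : Symmetric D)
    {l t : List α} (hl : l.Nodup) (hmin : ∀ b ∈ l, IsMinimal D t b) :
    ∃ t', TraceEquiv D t (l ++ t') := by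
  induction l generalizing t with
  | nil => exact ⟨t, .refl _⟩
  | cons b l ih =>
    obtain ⟨t₀, ht₀⟩ := (hmin b List.mem_cons_self).exists_equiv_cons hrefl
    have hmin₀ : ∀ b' ∈ l, IsMinimal D t₀ b' := fun b' hb' =>
      (((hmin b' (.tail _ hb')).of_equiv hrefl hsymm ht₀).of_cons
        fun h => (List.nodup_cons.1 hl).1 (h ▸ hb')).2
    obtain ⟨t', ht'⟩ := ih hl.of_cons hmin₀
    exact ⟨t', ht₀.trans (ht'.cons b)⟩

end Projection

section Foata

variable {D : α → α → Prop}

@[simp]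
theorem cliqueFlat_nil : cliqueFlat ([] : List (Clique D)) = [] :=
  rfl

@[simp]
theorem cliqueFlat_cons (A : Clique D) (w : List (Clique D)) :
    cliqueFlat (A :: w) = A.1.toList ++ cliqueFlat w :=
  rfl

@[simp]
theorem setFlat_cons (A : Finset α) (w : List (Finset α)) :
    setFlat (A :: w) = A.toList ++ setFlat w :=
  rfl

theorem setFlat_map_val (w : List (Clique D)) : setFlat (w.map Subtype.val) = cliqueFlat w :=
  congrArg List.flatten (List.map_map ..)

theorem Clique.toList_equiv_append_sdiff [DecidableEq α] (B : Clique D) {A : Finset α}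
    (hAB : A ⊆ B.1) : TraceEquiv D B.1.toList (A.toList ++ (B.1 \ A).toList) := by
  refine .of_perm ?_ fun a ha b hb => B.2.2 a (Finset.mem_toList.1 ha) b (Finset.mem_toList.1 hb)
  refine (List.perm_ext_iff_of_nodup (Finset.nodup_toList _) ?_).2 fun a => ?_
  · simp only [List.nodup_append, Finset.nodup_toList, Finset.mem_toList, Finset.mem_sdiff]
    grind
  · simp only [Finset.mem_toList, List.mem_append, Finset.mem_sdiff]
    grind

theorem Clique.isMinimal_append [DecidableEq α] (A : Clique D) {a : α} (ha : a ∈ A.1)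
    (r : List α) : IsMinimal D (A.1.toList ++ r) a :=
  isMinimal_append_of_mem (Finset.mem_toList.2 ha) (fun c hc hac => by
    by_contra hca
    exact A.2.2 a ha c (Finset.mem_toList.1 hc) (Ne.symm hca) hac) r

theorem IsMinimal.of_cliqueFlat_append [DecidableEq α] (hsymm : Symmetric D)
    {fs : List (Clique D)} {t : List α} {b : α} (hfs : fs.IsChain (Rhd D))
    (h : IsMinimal D (cliqueFlat fs ++ t) b) (hb : ∀ A ∈ fs.head?, b ∉ A.1) :
    (∀ c ∈ cliqueFlat fs, ¬ D b c) ∧ IsMinimal D t b := by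
  induction fs with
  | nil => exact ⟨by simp, h⟩
  | cons A fs ih =>
    rw [cliqueFlat_cons, List.append_assoc] at h
    obtain ⟨hA, hfst⟩ := h.of_append (by simpa using hb A rfl)
    have hb' : ∀ C ∈ fs.head?, b ∉ C.1 := fun C hC hbC => by
      obtain ⟨a, ha, hab⟩ := (List.isChain_cons.1 hfs).1 C hC b hbC
      exact hA a (Finset.mem_toList.2 ha) (hsymm hab)
    obtain ⟨hfs', ht⟩ := ih hfs.tail hfst hb'
    exact ⟨fun c hc => (List.mem_append.1 hc).elim (hA c) (hfs' c), ht⟩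

theorem mem_head_of_isMinimal_cliqueFlat [DecidableEq α] (hrefl : Reflexive D)
    (hsymm : Symmetric D) {B : Clique D} {fs : List (Clique D)} {b : α}
    (hfs : (B :: fs).IsChain (Rhd D)) (h : IsMinimal D (cliqueFlat (B :: fs)) b) : b ∈ B.1 := by
  by_contra hb
  rw [← List.append_nil (cliqueFlat _)] at h
  exact not_isMinimal_nil hrefl b (h.of_cliqueFlat_append hsymm hfs (by simpa using hb)).2

end Foata

theorem exists_cons_of_equiv_cliqueFlat_cons_append [DecidableEq α] {D : α → α → Prop}
    (hrefl : Reflexive D) (hsymm : Symmetric D) {A : Clique D} {fs fst : List (Clique D)}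
    {t : List α} (hfs : (A :: fs).IsChain (Rhd D)) (hfst : fst.IsChain (Rhd D))
    (h : TraceEquiv D (cliqueFlat fst) (cliqueFlat (A :: fs) ++ t)) :
    ∃ B fst' t', fst = B :: fst' ∧ A.1 ⊆ B.1 ∧ TraceEquiv D t ((B.1 \ A.1).toList ++ t') ∧
      TraceEquiv D (cliqueFlat fst') (cliqueFlat fs ++ t') := by
  have hA : ∀ a ∈ A.1, IsMinimal D (cliqueFlat fst) a := fun a ha =>
    .of_equiv hrefl hsymm h.symm (by simpa using A.isMinimal_append ha (cliqueFlat fs ++ t))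
  obtain _ | ⟨B, fst'⟩ := fst
  · obtain ⟨a, ha⟩ := A.2.1
    exact absurd (hA a ha) (not_isMinimal_nil hrefl a)
  have hAB : A.1 ⊆ B.1 := fun a ha => mem_head_of_isMinimal_cliqueFlat hrefl hsymm hfst (hA a ha)
  have hBA : ∀ b ∈ B.1 \ A.1, (∀ c ∈ cliqueFlat (A :: fs), ¬ D b c) ∧ IsMinimal D t b :=
    fun b hb => by
      obtain ⟨hbB, hbA⟩ := Finset.mem_sdiff.1 hb
      exact (((B.isMinimal_append hbB _).of_equiv hrefl hsymm h).of_cliqueFlat_append hsymm hfs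
        (by simpa using hbA))
  obtain ⟨t', ht'⟩ := TraceEquiv.exists_equiv_append_of_isMinimal hrefl hsymm
    (Finset.nodup_toList _) fun b hb => (hBA b (Finset.mem_toList.1 hb)).2
  set X := (B.1 \ A.1).toList
  refine ⟨B, fst', t', rfl, hAB, ht',
    TraceEquiv.append_left_cancel (u := A.1.toList ++ X) hrefl hsymm ?_⟩
  have hcomm : TraceEquiv D (cliqueFlat fs ++ X) (X ++ cliqueFlat fs) :=
    .append_comm_of_indep fun b hb c hc =>
      (hBA b (Finset.mem_toList.1 hb)).1 c (List.mem_append_right _ hc)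
  calc TraceEquiv D (A.1.toList ++ X ++ cliqueFlat fst') (cliqueFlat (B :: fst')) :=
        (B.toList_equiv_append_sdiff hAB).symm.append_right _
    TraceEquiv D _ (A.1.toList ++ (cliqueFlat fs ++ t)) := by simpa using h
    TraceEquiv D _ (A.1.toList ++ (cliqueFlat fs ++ (X ++ t'))) :=
        (ht'.append_left _).append_left _
    TraceEquiv D _ (A.1.toList ++ X ++ (cliqueFlat fs ++ t')) := by
        simpa using (hcomm.append_right t').append_left A.1.toList

theorem foata_concat_general [DecidableEq α] (D : α → α → Prop)
    (hrefl : Reflexive D) (hsymm : Symmetric D)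
    (s t : List α) (fs fst : List (Clique D))
    (hfs : fs ∈ Foata D) (hfs' : TraceEquiv D (cliqueFlat fs) s)
    (hfst : fst ∈ Foata D) (hfst' : TraceEquiv D (cliqueFlat fst) (s ++ t)) :
    fs.length ≤ fst.length ∧
    (∀ (i : ℕ) (hi : i < fs.length) (hi' : i < fst.length),
      (fs.get ⟨i, hi⟩).1 ⊆ (fst.get ⟨i, hi'⟩).1) ∧
    TraceEquiv D
      (setFlat (List.zipWith (fun A B => B.1 \ A.1) fs fst ++
        ((fst.drop fs.length).map Subtype.val)))
      t := by
  induction fs generalizing s t fst with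
  | nil =>
    refine ⟨Nat.zero_le _, fun i hi => absurd hi (Nat.not_lt_zero i), ?_⟩
    simpa [setFlat_map_val] using hfst'.trans (hfs'.symm.append_right t)
  | cons A fs ih =>
    obtain ⟨B, fst', t', rfl, hAB, ht, h'⟩ :=
      exists_cons_of_equiv_cliqueFlat_cons_append hrefl hsymm hfs hfst
        (hfst'.trans (hfs'.symm.append_right t))
    obtain ⟨hlen, hsub, hrest⟩ := ih _ t' fst' hfs.tail (.refl _) hfst.tail h'
    refine ⟨Nat.succ_le_succ hlen, ?_, ?_⟩
    · rintro (_ | i) hi hi'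
      exacts [hAB, hsub i _ _]
    · simpa using (hrest.append_left _).trans ht.symm

/-- compatibility of concatenation with Foata normal forms.
If `⟨s⟩ = A₁ ⋯ A_p` and `⟨st⟩ = B₁ ⋯ B_m` then `m ≥ p`, `A_i ⊆ B_i` for all
`1 ≤ i ≤ p`, and `Π((B₁\A₁) ⋯ (B_p\A_p) B_{p+1} ⋯ B_m) = t`. -/
theorem foata_concat [Fintype α] [DecidableEq α] (D : α → α → Prop)
    (hrefl : Reflexive D) (hsymm : Symmetric D)
    (s t : List α) (fs fst : List (Clique D))
    (hfs : fs ∈ Foata D) (hfs' : TraceEquiv D (cliqueFlat fs) s)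
    (hfst : fst ∈ Foata D) (hfst' : TraceEquiv D (cliqueFlat fst) (s ++ t)) :
    fs.length ≤ fst.length ∧
    (∀ (i : ℕ) (hi : i < fs.length) (hi' : i < fst.length),
      (fs.get ⟨i, hi⟩).1 ⊆ (fst.get ⟨i, hi'⟩).1) ∧
    TraceEquiv D
      (setFlat (List.zipWith (fun A B => B.1 \ A.1) fs fst ++
        ((fst.drop fs.length).map Subtype.val)))
      t :=
  foata_concat_general D hrefl hsymm s t fs fst hfs hfs' hfst hfst'
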